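/- Let F be a field, V and P nonsingular k×k matrices over F with P = [p_{ij}], Q = P⁻¹ = [q_{ij}], U = V·P with columns u_1,…,u_k, V̂ = (Vᵗ)⁻¹, and let δ, ε, δ', ε' ∈ F satisfy δδ' + εε' = 1 and εδ' + δε' = 0. Let X be any k×k matrix over F with columns x_1,…,x_k, set Y = δ V̂ Xᵗ U + ε X P with columns y_1,…,y_k, and let z'_a = ∑_{ℓ=1}^k q_{ℓa} y_ℓ. Then for any a, b ∈ {1,…,k}: ∑_{i ∈ {1,…,k}∖{a}} p_{ib} (v_aᵗ x_i) + (δ' + ε') p_{ab} ∑_{j ∈ {1,…,k}∖{b}} q_{ja} (v_aᵗ y_j) = δ' (u_bᵗ z'_a) + (ε' − (ε' + δ') q_{ba} p_{ab}) (v_aᵗ y_b), where v_1,…,v_k are the columns of V. -/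

import Mathlib

open Matrix Finset

/-!
Write `G = Vᵀ X` (entries `v_aᵗ x_i`) and `W = Vᵀ Y P⁻¹` (entries `v_aᵗ z'_j`). The definition of
`Y` says exactly `W = δ Gᵀ + ε G`, and the conditions on `δ', ε'` invert this to
`G = δ' Wᵀ + ε' W`. The packet identity is then bookkeeping with entries of `G P`, `W P = Vᵀ Y` and
`Pᵀ W`: the diagonal entry `G_aa = (δ' + ε') W_aa` accounts for the terms missing from both
truncated sums.
-/

noncomputable def parityMatrix {R n : Type*} [CommRing R] [Fintype n] [DecidableEq n]
    (V P : Matrix n n R) (δ ε : R) (X : Matrix n n R) : Matrix n n R :=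
  δ • ((Vᵀ)⁻¹ * Xᵀ * (V * P)) + ε • (X * P)

theorem eq_of_eq_smul_transpose_add_smul {R n : Type*} [CommRing R] {G W : Matrix n n R}
    {δ ε δ' ε' : R}
    (h1 : δ * δ' + ε * ε' = 1) (h2 : ε * δ' + δ * ε' = 0)
    (hW : W = δ • Gᵀ + ε • G) :
    G = δ' • Wᵀ + ε' • W := by
  subst hW
  ext i j
  simp only [Matrix.add_apply, Matrix.smul_apply, transpose_apply, smul_eq_mul]
  linear_combination -(G i j * h1 + G j i * h2)

section

variable {R n : Type*} [CommRing R] [Fintype n] [DecidableEq n]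

theorem transpose_mul_parityMatrix_mul_inv {V P : Matrix n n R}
    (hV : IsUnit V.det) (hP : IsUnit P.det) (δ ε : R) (X : Matrix n n R) :
    Vᵀ * parityMatrix V P δ ε X * P⁻¹ = δ • (Vᵀ * X)ᵀ + ε • (Vᵀ * X) := by
  have hVt : Vᵀ * (Vᵀ)⁻¹ = 1 := mul_nonsing_inv _ (by rwa [det_transpose])
  have hPP : P * P⁻¹ = 1 := mul_nonsing_inv P hP
  simp only [parityMatrix, Matrix.mul_add, Matrix.add_mul, Matrix.mul_smul, Matrix.smul_mul,
    transpose_mul, transpose_transpose, ← Matrix.mul_assoc, hVt, Matrix.one_mul]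
  simp only [Matrix.mul_assoc, hPP, Matrix.mul_one]

theorem exchanged_packet_entry_identity {G H W P Q : Matrix n n R} {δ' ε' : R}
    (hG : G = δ' • Wᵀ + ε' • W) (hW : W = H * Q) (hQP : Q * P = 1) (a b : n) :
    ∑ i ∈ univ.erase a, P i b * G a i +
        (δ' + ε') * P a b * ∑ j ∈ univ.erase b, Q j a * H a j =
      δ' * (Pᵀ * W) b a + (ε' - (ε' + δ') * Q b a * P a b) * H a b := by
  have hWP : W * P = H := by rw [hW, Matrix.mul_assoc, hQP, Matrix.mul_one]
  have hGP : ∑ i, P i b * G a i = δ' * (Pᵀ * W) b a + ε' * H a b := by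
    calc ∑ i, P i b * G a i = (G * P) a b := by simp only [mul_apply, mul_comm]
      _ = _ := by
        rw [hG, Matrix.add_mul, Matrix.smul_mul, Matrix.smul_mul, hWP]
        simp only [Matrix.add_apply, Matrix.smul_apply, smul_eq_mul, mul_apply, transpose_apply,
          mul_comm]
  have hGaa : G a a = (δ' + ε') * W a a := by
    rw [hG]
    simp only [Matrix.add_apply, Matrix.smul_apply, smul_eq_mul, transpose_apply]
    ring
  have hHQ : ∑ j, Q j a * H a j = W a a := by
    simp only [hW, mul_apply, mul_comm]
  rw [sum_erase_eq_sub (mem_univ a), sum_erase_eq_sub (mem_univ b), hGP, hHQ, hGaa]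
  ring

end

/-- The exchanged packet sent from newcomer `a` to newcomer `k+b`:
`∑_{i≠a} p_{ib}(v_aᵗ x_i) + (δ'+ε') p_{ab} ∑_{j≠b} q_{ja}(v_aᵗ y_j)
  = δ' (u_bᵗ z'_a) + (ε' − (ε'+δ')q_{ba}p_{ab})(v_aᵗ y_b)`. -/
theorem dual_exchanged_packet_identity
    {F : Type*} [Field F] {k : ℕ}
    (V P : Matrix (Fin k) (Fin k) F)
    (hV : IsUnit V.det) (hP : IsUnit P.det)
    (δ ε δ' ε' : F)
    (h1 : δ * δ' + ε * ε' = 1) (h2 : ε * δ' + δ * ε' = 0)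
    (X : Matrix (Fin k) (Fin k) F)
    (Y : Matrix (Fin k) (Fin k) F)
    (hY : Y = δ • ((Vᵀ)⁻¹ * Xᵀ * (V * P)) + ε • (X * P))
    (z' : Fin k → Fin k → F)
    (hz' : ∀ j idx, z' j idx = ∑ ℓ, P⁻¹ ℓ j * Y idx ℓ) :
    ∀ a b : Fin k,
      (∑ i ∈ univ.erase a, P i b *
          ((fun idx => V idx a) ⬝ᵥ (fun idx => X idx i))) +
        (δ' + ε') * P a b *
          (∑ j ∈ univ.erase b, P⁻¹ j a *
            ((fun idx => V idx a) ⬝ᵥ (fun idx => Y idx j))) =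
      δ' * ((fun idx => (V * P) idx b) ⬝ᵥ z' a) +
        (ε' - (ε' + δ') * P⁻¹ b a * P a b) *
          ((fun idx => V idx a) ⬝ᵥ (fun idx => Y idx b)) := by
  intro a b
  have hW : Vᵀ * Y * P⁻¹ = δ • (Vᵀ * X)ᵀ + ε • (Vᵀ * X) := by
    rw [hY]
    exact transpose_mul_parityMatrix_mul_inv hV hP δ ε X
  have hz : z' a = fun idx => (Y * P⁻¹) idx a := by
    ext idx
    simp only [hz', mul_apply, mul_comm]
  have hu : (fun idx => (V * P) idx b) ⬝ᵥ z' a = (Pᵀ * (Vᵀ * Y * P⁻¹)) b a := by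
    rw [hz]
    change ((V * P)ᵀ * (Y * P⁻¹)) b a = _
    rw [transpose_mul, Matrix.mul_assoc, Matrix.mul_assoc]
  rw [hu]
  exact exchanged_packet_entry_identity (eq_of_eq_smul_transpose_add_smul h1 h2 hW)
    rfl (nonsing_inv_mul P hP) a b
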